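/- arXiv:2411.08084 — 4 statements merged into one kernel-verified Lean document; each statement's English description precedes it below -/
import Mathlib

section
/- Let P be the first-return map of the Collatz map on N1 ∪ N2, H a complex Hilbert space with orthonormal basis {e_n}_{n ∈ N1∪N2}, T1, T2 the bounded operators with T1 e_n = e_{P(n)} for n ∈ N1, T1 e_n = 0 for n ∈ N2, T2 e_n = e_{P(n)} for n ∈ N2, T2 e_n = 0 for n ∈ N1, and S1 = T1*T2*, S2 = T2*. Then the following are equivalent: (i) C*(S1,S2) has no non-trivial reducing subspaces; (ii) the Collatz conjecture holds. -/
/-- The Collatz map on positive integers: `3n+1` for odd `n`, `n/2` for even `n`. -/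
def collatz (n : ℕ+) : ℕ+ :=
  if h : (n : ℕ) % 2 = 1 then 3 * n + 1
  else ⟨(n : ℕ) / 2, by
    have h2 : 0 < n.1 := n.2
    have h3 : ¬ n.1 % 2 = 1 := h
    show 0 < n.1 / 2
    omega⟩

/-- The forward orbit of `x` under `f`. -/
def orbit {X : Type*} (f : X → X) (x : X) : Set X := Set.range fun k => f^[k] x

/-- The orbit equivalence relation induced by `f`: `x ~ y` iff the orbits meet. -/
def orbEquiv {X : Type*} (f : X → X) (x y : X) : Prop :=
  (orbit f x ∩ orbit f y).Nonempty

/-- `N₁ = {n : n ≡ 1, 5 (mod 6)}`. -/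
def N1 : Set ℕ+ := {n : ℕ+ | (n : ℕ) % 6 = 1 ∨ (n : ℕ) % 6 = 5}

/-- `N₂ = {n : n ≡ 4, 16 (mod 18)}`. -/
def N2 : Set ℕ+ := {n : ℕ+ | (n : ℕ) % 18 = 4 ∨ (n : ℕ) % 18 = 16}

/-- `y` is the first return of `x` to `S` under iteration of `f`: for some `k ≥ 1`,
`y = f^[k] x ∈ S` and no earlier positive iterate of `x` lies in `S`. -/
def IsFirstReturn {X : Type*} (f : X → X) (S : Set X) (x y : X) : Prop :=
  ∃ k : ℕ, 0 < k ∧ f^[k] x ∈ S ∧ y = f^[k] x ∧ ∀ j : ℕ, 0 < j → j < k → f^[j] x ∉ S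

/-- The C*-algebra of operators generated by a set `S` of bounded operators on a complex
Hilbert space: the closure of the (non-unital) star subalgebra generated by `S`. -/
noncomputable def CstarGen {H : Type*} [NormedAddCommGroup H] [InnerProductSpace ℂ H]
    [CompleteSpace H] (S : Set (H →L[ℂ] H)) : Set (H →L[ℂ] H) :=
  closure (NonUnitalStarAlgebra.adjoin ℂ S : Set (H →L[ℂ] H))

/-!
`T1` and `T2` shift the basis along `P` (on `N1`, resp. `N2`) and are partial isometries; since
`T2 = S2*` and `T1 = S2 S1*`, the reducing subspaces of `C*(S1, S2)` are exactly the closed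
subspaces reducing both `T1` and `T2`.

If the orbit of some `m` misses `1`, the closed span of the `e_n` with `1 ∈ orb(n)` reduces `T1`
and `T2`: this set of indices is invariant under `P` in both directions, contains `1` and misses
the indices in the orbit of `m`.

Conversely, the orthogonal projection `Q` onto a reducing subspace commutes with `T1`, `T2` and
their adjoints, so the matrix entries `⟪e_x, Q e_y⟫` do not change when `P` is applied to `x` and
`y` lying in the same `Nᵢ` (where `P` is injective), and vanish when `x`, `y` lie in different
ones. Under the Collatz conjecture all `P`-orbits end in the cycle `1 ↦ 4 ↦ 1`, which forces
`Q` to be a scalar, hence `0` or `1`.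
-/

open Function

open scoped InnerProductSpace
open ContinuousLinearMap (adjoint adjoint_inner_left adjoint_inner_right)

namespace Submodule

variable {𝕜 H : Type*} [RCLike 𝕜] [NormedAddCommGroup H] [InnerProductSpace 𝕜 H]

theorem eq_bot_or_eq_top_of_starProjection_eq_smul {M : Submodule 𝕜 H}
    [M.HasOrthogonalProjection] {c : 𝕜} (h : M.starProjection = c • 1) : M = ⊥ ∨ M = ⊤ := by
  rw [← M.range_starProjection, h]
  by_cases hc : c = 0
  · left
    simp [hc]
  · right
    refine eq_top_iff'.mpr fun x => ⟨c⁻¹ • x, ?_⟩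
    simp [hc]

variable [CompleteSpace H]

def reducingAlgebra (M : Submodule 𝕜 H) : StarSubalgebra 𝕜 (H →L[𝕜] H) where
  carrier := {A | ∀ x ∈ M, A x ∈ M ∧ adjoint A x ∈ M}
  mul_mem' {A B} hA hB x hx := by
    refine ⟨(hA _ (hB x hx).1).1, ?_⟩
    rw [← ContinuousLinearMap.star_eq_adjoint, star_mul]
    exact (hB _ (hA x hx).2).2
  one_mem' x hx := by simpa [ContinuousLinearMap.adjoint_one] using hx
  add_mem' {A B} hA hB x hx := by
    rw [map_add]
    exact ⟨M.add_mem (hA x hx).1 (hB x hx).1, M.add_mem (hA x hx).2 (hB x hx).2⟩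
  zero_mem' x hx := by simp
  algebraMap_mem' c x hx := by
    rw [← ContinuousLinearMap.star_eq_adjoint, ← algebraMap_star_comm]
    simp only [Algebra.algebraMap_eq_smul_one, smul_apply, one_apply_eq_self]
    exact ⟨M.smul_mem _ hx, M.smul_mem _ hx⟩
  star_mem' {A} hA x hx := by
    rw [ContinuousLinearMap.star_eq_adjoint, ContinuousLinearMap.adjoint_adjoint]
    exact (hA x hx).symm

variable {M : Submodule 𝕜 H}

theorem mem_reducingAlgebra {A : H →L[𝕜] H} :
    A ∈ M.reducingAlgebra ↔ ∀ x ∈ M, A x ∈ M ∧ adjoint A x ∈ M := Iff.rfl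

theorem isClosed_reducingAlgebra (hM : IsClosed (M : Set H)) :
    IsClosed (M.reducingAlgebra : Set (H →L[𝕜] H)) := by
  have h : (M.reducingAlgebra : Set (H →L[𝕜] H)) =
      ⋂ x ∈ M, ((fun A : H →L[𝕜] H => A x) ⁻¹' M ∩ (fun A => adjoint A x) ⁻¹' M) := by
    ext A
    simp [mem_reducingAlgebra]
  rw [h]
  refine isClosed_biInter fun x _ => (hM.preimage ?_).inter (hM.preimage ?_)
  · exact (ContinuousLinearMap.apply 𝕜 H x).continuous
  · exact (ContinuousLinearMap.apply 𝕜 H x).continuous.comp adjoint.continuous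

theorem commute_starProjection [M.HasOrthogonalProjection] {A : H →L[𝕜] H}
    (hA : A ∈ M.reducingAlgebra) : Commute M.starProjection A := by
  rw [ContinuousLinearMap.IsIdempotentElem.commute_iff M.isIdempotentElem_starProjection,
    range_starProjection, ker_starProjection, Module.End.mem_invtSubmodule_iff_forall_mem_of_mem]
  exact ⟨fun x hx => (hA x hx).1, ContinuousLinearMap.orthogonal_mem_invtSubmodule
    ((Module.End.mem_invtSubmodule_iff_forall_mem_of_mem _).mpr fun x hx => (hA x hx).2)⟩

theorem cstarGen_subset_reducingAlgebra_iff {E : Type*} [NormedAddCommGroup E]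
    [InnerProductSpace ℂ E] [CompleteSpace E] {N : Submodule ℂ E} (hN : IsClosed (N : Set E))
    {S : Set (E →L[ℂ] E)} :
    CstarGen S ⊆ N.reducingAlgebra ↔ S ⊆ N.reducingAlgebra := by
  refine ⟨fun h => (NonUnitalStarAlgebra.subset_adjoin ℂ S).trans (subset_closure.trans h),
    fun h => closure_minimal ?_ (isClosed_reducingAlgebra hN)⟩
  exact NonUnitalStarAlgebra.adjoin_le (S := N.reducingAlgebra.toNonUnitalStarSubalgebra) h

end Submodule

namespace HilbertBasis

variable {ι 𝕜 H : Type*} [RCLike 𝕜] [NormedAddCommGroup H] [InnerProductSpace 𝕜 H]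
  (b : HilbertBasis ι 𝕜 H)

theorem eq_of_forall_inner_eq {v w : H} (h : ∀ i, ⟪b i, v⟫_𝕜 = ⟪b i, w⟫_𝕜) : v = w :=
  b.repr.injective (lp.ext (funext fun i => by simpa [b.repr_apply_apply] using h i))

theorem continuousLinearMap_ext {A B : H →L[𝕜] H} (h : ∀ i, A (b i) = B (b i)) : A = B :=
  ContinuousLinearMap.ext_on (Submodule.dense_iff_topologicalClosure_eq_top.mpr b.dense_span)
    (by rintro _ ⟨i, rfl⟩; exact h i)

theorem inner_eq_ite [DecidableEq ι] (i j : ι) : ⟪b i, b j⟫_𝕜 = if i = j then 1 else 0 :=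
  orthonormal_iff_ite.mp b.orthonormal i j

theorem apply_mem_closure_span_image_iff {E : Set ι} {i : ι} :
    b i ∈ (Submodule.span 𝕜 (b '' E)).topologicalClosure ↔ i ∈ E := by
  classical
  refine ⟨fun h => by_contra fun hi => ?_,
    fun hi => Submodule.le_topologicalClosure _ (Submodule.subset_span ⟨i, hi, rfl⟩)⟩
  have hle : (Submodule.span 𝕜 (b '' E)).topologicalClosure ≤
      (innerSL 𝕜 (b i) : H →ₗ[𝕜] 𝕜).ker := by
    refine Submodule.topologicalClosure_minimal _ (Submodule.span_le.mpr ?_)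
      (ContinuousLinearMap.isClosed_ker _)
    rintro _ ⟨j, hj, rfl⟩
    simp [b.inner_eq_ite, show i ≠ j by rintro rfl; exact hi hj]
  exact b.orthonormal.ne_zero i (by simpa [b.inner_eq_ite] using hle h)

end HilbertBasis

structure IsPartialShift {ι 𝕜 H : Type*} [RCLike 𝕜] [NormedAddCommGroup H]
    [InnerProductSpace 𝕜 H] (b : HilbertBasis ι 𝕜 H) (A : Set ι) (σ : ι → ι)
    (T : H →L[𝕜] H) : Prop where
  apply_of_mem : ∀ i ∈ A, T (b i) = b (σ i)
  apply_of_notMem : ∀ i ∉ A, T (b i) = 0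
  injOn : Set.InjOn σ A

namespace IsPartialShift

variable {ι 𝕜 H : Type*} [RCLike 𝕜] [NormedAddCommGroup H] [InnerProductSpace 𝕜 H]
  [CompleteSpace H] {b : HilbertBasis ι 𝕜 H} {A : Set ι} {σ : ι → ι} {T : H →L[𝕜] H}

theorem adjoint_apply_map (hT : IsPartialShift b A σ T) {i : ι} (hi : i ∈ A) :
    adjoint T (b (σ i)) = b i := by
  classical
  refine b.eq_of_forall_inner_eq fun k => ?_
  rw [adjoint_inner_right]
  by_cases hk : k ∈ A
  · rw [hT.apply_of_mem k hk, b.inner_eq_ite, b.inner_eq_ite]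
    exact if_congr (hT.injOn.eq_iff hk hi) rfl rfl
  · rw [hT.apply_of_notMem k hk, inner_zero_left, b.orthonormal.2]
    rintro rfl
    exact hk hi

theorem adjoint_apply_of_notMem_image (hT : IsPartialShift b A σ T) {j : ι} (hj : j ∉ σ '' A) :
    adjoint T (b j) = 0 := by
  refine b.eq_of_forall_inner_eq fun k => ?_
  rw [adjoint_inner_right, inner_zero_right]
  by_cases hk : k ∈ A
  · rw [hT.apply_of_mem k hk, b.orthonormal.2]
    exact fun h => hj ⟨k, hk, h⟩
  · rw [hT.apply_of_notMem k hk, inner_zero_left]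

theorem mem_reducingAlgebra (hT : IsPartialShift b A σ T) {E : Set ι}
    (hE : ∀ i ∈ A, σ i ∈ E ↔ i ∈ E) :
    T ∈ (Submodule.span 𝕜 (b '' E)).topologicalClosure.reducingAlgebra := by
  set M := (Submodule.span 𝕜 (b '' E)).topologicalClosure
  have hM : IsClosed (M : Set H) := Submodule.isClosed_topologicalClosure _
  have hb : ∀ i ∈ E, b i ∈ M := fun i hi => b.apply_mem_closure_span_image_iff.mpr hi
  have hmaps : ∀ S : H →L[𝕜] H, (∀ i ∈ E, S (b i) ∈ M) → ∀ v ∈ M, S v ∈ M := fun S hS =>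
    Submodule.topologicalClosure_minimal (t := M.comap (S : H →ₗ[𝕜] H)) _
      (Submodule.span_le.mpr (by rintro _ ⟨i, hi, rfl⟩; exact hS i hi)) (hM.preimage S.continuous)
  refine fun v hv => ⟨hmaps T (fun i hi => ?_) v hv, hmaps (adjoint T) (fun j hj => ?_) v hv⟩
  · by_cases hiA : i ∈ A
    · rw [hT.apply_of_mem i hiA]
      exact hb _ ((hE i hiA).mpr hi)
    · rw [hT.apply_of_notMem i hiA]
      exact M.zero_mem
  · by_cases hjA : j ∈ σ '' A
    · obtain ⟨i, hiA, rfl⟩ := hjA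
      rw [hT.adjoint_apply_map hiA]
      exact hb _ ((hE i hiA).mp hj)
    · rw [hT.adjoint_apply_of_notMem_image hjA]
      exact M.zero_mem

variable {Q : H →L[𝕜] H}

theorem inner_map_map_of_commute (hT : IsPartialShift b A σ T) (hQ : Commute Q T) {i j : ι}
    (hi : i ∈ A) (hj : j ∈ A) : ⟪b (σ i), Q (b (σ j))⟫_𝕜 = ⟪b i, Q (b j)⟫_𝕜 := by
  have hQT : ∀ v, Q (T v) = T (Q v) := DFunLike.congr_fun hQ.eq
  rw [← hT.apply_of_mem j hj, hQT, ← adjoint_inner_left, hT.adjoint_apply_map hi]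

theorem inner_map_right_eq_zero (hT : IsPartialShift b A σ T) (hQ : Commute Q T) {i j : ι}
    (hi : i ∈ A) (hj : j ∉ σ '' A) : ⟪b j, Q (b (σ i))⟫_𝕜 = 0 := by
  have hQT : ∀ v, Q (T v) = T (Q v) := DFunLike.congr_fun hQ.eq
  rw [← hT.apply_of_mem i hi, hQT, ← adjoint_inner_left, hT.adjoint_apply_of_notMem_image hj,
    inner_zero_left]

theorem inner_map_left_eq_zero (hT : IsPartialShift b A σ T) (hQ : Commute Q (adjoint T))
    {i j : ι} (hi : i ∈ A) (hj : j ∉ σ '' A) : ⟪b (σ i), Q (b j)⟫_𝕜 = 0 := by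
  have hQT : ∀ v, Q (adjoint T v) = adjoint T (Q v) := DFunLike.congr_fun hQ.eq
  rw [← hT.apply_of_mem i hi, ← adjoint_inner_right, ← hQT, hT.adjoint_apply_of_notMem_image hj,
    map_zero, inner_zero_right]

end IsPartialShift

theorem IsFirstReturn.unique {X : Type*} {f : X → X} {S : Set X} {x y y' : X}
    (h : IsFirstReturn f S x y) (h' : IsFirstReturn f S x y') : y = y' := by
  obtain ⟨k, hk, hkS, rfl, hkmin⟩ := h
  obtain ⟨l, hl, hlS, rfl, hlmin⟩ := h'
  rcases lt_trichotomy k l with hkl | rfl | hlk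
  · exact absurd hkS (hlmin k hk hkl)
  · rfl
  · exact absurd hlS (hkmin l hl hlk)

theorem isFirstReturn_apply {X : Type*} {f : X → X} {S : Set X} {x : X} (h : f x ∈ S) :
    IsFirstReturn f S x (f x) :=
  ⟨1, one_pos, h, rfl, fun _ hj hj' => absurd hj' (by omega)⟩

def IsFirstReturnMap {X : Type*} (f : X → X) (S : Set X) (g : S → S) : Prop :=
  ∀ x : S, IsFirstReturn f S x (g x)

theorem IsFirstReturnMap.exists_iterate_eq {X : Type*} {f : X → X} {S : Set X} {g : S → S}
    (hg : IsFirstReturnMap f S g) (n : ℕ) (x : S) :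
    ∃ m, n ≤ m ∧ (g^[n] x : X) = f^[m] x := by
  induction n with
  | zero => exact ⟨0, le_rfl, rfl⟩
  | succ n ih =>
    obtain ⟨m, hnm, hm⟩ := ih
    obtain ⟨k, hk, -, hky, -⟩ := hg (g^[n] x)
    refine ⟨k + m, by omega, ?_⟩
    rw [iterate_succ_apply', hky, hm, iterate_add_apply]

theorem mem_orbit_iterate_iff {X : Type*} {f : X → X} {x y : X} {p : ℕ}
    (hy : IsPeriodicPt f p y) (hp : 0 < p) (k : ℕ) :
    y ∈ orbit f (f^[k] x) ↔ y ∈ orbit f x := by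
  constructor
  · rintro ⟨r, hr : f^[r] (f^[k] x) = y⟩
    exact ⟨r + k, show f^[r + k] x = y by rwa [iterate_add_apply]⟩
  · rintro ⟨r, hr : f^[r] x = y⟩
    refine ⟨r + p * k - k, ?_⟩
    have hk : k ≤ p * k := Nat.le_mul_of_pos_left k hp
    show f^[r + p * k - k] (f^[k] x) = y
    rw [← iterate_add_apply, Nat.sub_add_cancel (by omega), add_comm, iterate_add_apply, hr,
      (hy.mul_const k).eq]

namespace Collatz

theorem coe_collatz_of_odd {n : ℕ+} (h : (n : ℕ) % 2 = 1) : (collatz n : ℕ) = 3 * n + 1 := by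
  simp [collatz, h]

theorem coe_collatz_of_even {n : ℕ+} (h : (n : ℕ) % 2 = 0) : (collatz n : ℕ) = n / 2 := by
  simp [collatz, h]

theorem collatz_iterate_two_pow_mul (k : ℕ) (o : ℕ+) : collatz^[k] (2 ^ k * o) = o := by
  induction k with
  | zero => simp
  | succ k ih =>
    have h : collatz (2 ^ (k + 1) * o) = 2 ^ k * o := by
      have h2 : ((2 ^ (k + 1) * o : ℕ+) : ℕ) = 2 * (2 ^ k * o : ℕ+) := by
        simp only [PNat.mul_coe, PNat.pow_coe, PNat.val_ofNat]
        ring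
      apply PNat.eq
      rw [coe_collatz_of_even (by omega), h2]
      omega
    rw [iterate_succ_apply, h, ih]

theorem isPeriodicPt_one : IsPeriodicPt collatz 3 1 := by decide

theorem collatz_iterate_one (k : ℕ) :
    collatz^[k] 1 = 1 ∨ collatz^[k] 1 = 4 ∨ collatz^[k] 1 = 2 := by
  rw [← isPeriodicPt_one.iterate_mod_apply]
  have : k % 3 < 3 := Nat.mod_lt k (by norm_num)
  interval_cases k % 3 <;> decide

instance : DecidablePred (· ∈ N1) := fun _ => inferInstanceAs (Decidable (_ ∨ _))

instance : DecidablePred (· ∈ N2) := fun _ => inferInstanceAs (Decidable (_ ∨ _))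

theorem mem_N1_iff {n : ℕ+} : n ∈ N1 ↔ (n : ℕ) % 2 = 1 ∧ (n : ℕ) % 3 ≠ 0 := by
  show _ ∨ _ ↔ _
  omega

theorem notMem_N2_of_mem_N1 {n : ℕ+} (h : n ∈ N1) : n ∉ N2 := fun h2 => by
  rcases h with h | h <;> rcases h2 with h2 | h2 <;> omega

theorem exists_iterate_odd_dvd (n : ℕ+) :
    ∃ k, (collatz^[k] n : ℕ) % 2 = 1 ∧ (collatz^[k] n : ℕ) ∣ n := by
  obtain ⟨k, m, hm, hn⟩ := Nat.exists_eq_two_pow_mul_odd n.ne_zero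
  let o : ℕ+ := ⟨m, hm.pos⟩
  have hn' : n = 2 ^ k * o := PNat.eq (by rw [hn, PNat.mul_coe, PNat.pow_coe]; rfl)
  refine ⟨k, ?_⟩
  rw [hn', collatz_iterate_two_pow_mul, PNat.mul_coe]
  exact ⟨Nat.odd_iff.mp hm, Dvd.intro_left _ rfl⟩

theorem exists_iterate_mem_N1 (n : ℕ+) : ∃ k, collatz^[k] n ∈ N1 := by
  obtain ⟨k, hodd, -⟩ := exists_iterate_odd_dvd n
  set o := collatz^[k] n
  by_cases h3 : (o : ℕ) % 3 = 0
  · obtain ⟨l, hodd', hdvd⟩ := exists_iterate_odd_dvd (collatz o)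
    rw [coe_collatz_of_odd hodd] at hdvd
    refine ⟨l + 1 + k, ?_⟩
    rw [iterate_add_apply, iterate_succ_apply, mem_N1_iff]
    refine ⟨hodd', fun h => ?_⟩
    have := (Nat.dvd_of_mod_eq_zero h).trans hdvd
    omega
  · exact ⟨k, mem_N1_iff.mpr ⟨hodd, h3⟩⟩

theorem collatz_mem_N2 {n : ℕ+} (hn : n ∈ N1) : collatz n ∈ N2 := by
  have hodd : (n : ℕ) % 2 = 1 := (mem_N1_iff.mp hn).1
  show (collatz n : ℕ) % 18 = 4 ∨ (collatz n : ℕ) % 18 = 16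
  rw [coe_collatz_of_odd hodd]
  rcases hn with h | h <;> omega

/-- Started in `N2`, the orbit only halves until it next meets `N1 ∪ N2`: an odd point
before that would lie outside `N1`, hence be a multiple of `3`, yet it divides `x ≡ 1 [MOD 3]`. -/
theorem coe_iterate_mul_two_pow_of_mem_N2 {x : ℕ+} (hx : x ∈ N2) {k : ℕ}
    (hk : ∀ j, 0 < j → j < k → collatz^[j] x ∉ N1) : (collatz^[k] x : ℕ) * 2 ^ k = x := by
  induction k with
  | zero => simp
  | succ k ih =>
    have hy := ih fun j hj hjk => hk j hj (by omega)
    set y := collatz^[k] x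
    have hx3 : (x : ℕ) % 3 = 1 := by rcases hx with h | h <;> omega
    have hy3 : (y : ℕ) % 3 ≠ 0 := fun h => by
      have := (Nat.dvd_of_mod_eq_zero h).mul_right (2 ^ k)
      rw [hy] at this
      omega
    have hyeven : (y : ℕ) % 2 = 0 := by
      rcases Nat.eq_zero_or_pos k with rfl | hk0
      · change (x : ℕ) % 2 = 0
        rcases hx with h | h <;> omega
      · have hyN1 : y ∉ N1 := hk k hk0 (by omega)
        rw [mem_N1_iff] at hyN1
        omega
    rw [iterate_succ_apply', coe_collatz_of_even hyeven, pow_succ, ← hy]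
    rw [mul_comm (2 ^ k), ← mul_assoc, Nat.div_mul_cancel (Nat.dvd_of_mod_eq_zero hyeven)]

def one : ↥(N1 ∪ N2) := ⟨1, Or.inl (Or.inl rfl)⟩

def four : ↥(N1 ∪ N2) := ⟨4, Or.inr (Or.inl rfl)⟩

variable {P : ↥(N1 ∪ N2) → ↥(N1 ∪ N2)}

theorem coe_P_of_mem_N1 (hP : IsFirstReturnMap collatz (N1 ∪ N2) P)
    {x : ↥(N1 ∪ N2)} (hx : ↑x ∈ N1) : (P x : ℕ+) = collatz x :=
  (hP x).unique (isFirstReturn_apply (Or.inr (collatz_mem_N2 hx)))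

theorem P_mem_N2 (hP : IsFirstReturnMap collatz (N1 ∪ N2) P)
    {x : ↥(N1 ∪ N2)} (hx : ↑x ∈ N1) : ↑(P x) ∈ N2 := by
  rw [coe_P_of_mem_N1 hP hx]
  exact collatz_mem_N2 hx

theorem injOn_P_N1 (hP : IsFirstReturnMap collatz (N1 ∪ N2) P) :
    Set.InjOn P (Subtype.val ⁻¹' N1) := by
  intro x hx y hy hxy
  have h := congrArg (fun z : ↥(N1 ∪ N2) => ((z : ℕ+) : ℕ)) hxy
  simp only [coe_P_of_mem_N1 hP hx, coe_P_of_mem_N1 hP hy,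
    coe_collatz_of_odd (mem_N1_iff.mp hx).1, coe_collatz_of_odd (mem_N1_iff.mp hy).1] at h
  exact Subtype.ext (PNat.eq (by omega))

theorem exists_P_eq_of_mem_N2 (hP : IsFirstReturnMap collatz (N1 ∪ N2) P)
    {y : ↥(N1 ∪ N2)} (hy : ↑y ∈ N2) : ∃ x, ↑x ∈ N1 ∧ P x = y := by
  have hy' : ((y : ℕ+) : ℕ) % 18 = 4 ∨ ((y : ℕ+) : ℕ) % 18 = 16 := hy
  have h4 : 4 ≤ ((y : ℕ+) : ℕ) := by omega
  let x : ℕ+ := ⟨(((y : ℕ+) : ℕ) - 1) / 3, by omega⟩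
  have hx : x ∈ N1 := by
    show (((y : ℕ+) : ℕ) - 1) / 3 % 6 = 1 ∨ (((y : ℕ+) : ℕ) - 1) / 3 % 6 = 5
    omega
  refine ⟨⟨x, Or.inl hx⟩, hx, Subtype.ext (PNat.eq ?_)⟩
  rw [coe_P_of_mem_N1 hP hx, coe_collatz_of_odd (mem_N1_iff.mp hx).1]
  simp only [x, PNat.mk_coe]
  omega

/-- With `z = P x = P y` we get `x = 2 ^ k z` and `y = 2 ^ l z`; if `k < l`, halving `y` would
reach `x ∈ N2` before its first return. -/
theorem injOn_P_N2 (hP : IsFirstReturnMap collatz (N1 ∪ N2) P) :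
    Set.InjOn P (Subtype.val ⁻¹' N2) := by
  intro x hx y hy hxy
  obtain ⟨k, hk, -, hkP, hkmin⟩ := hP x
  obtain ⟨l, hl, -, hlP, hlmin⟩ := hP y
  have hkl : collatz^[k] (x : ℕ+) = collatz^[l] y := by rw [← hkP, ← hlP, hxy]
  wlog hle : k ≤ l generalizing x y k l
  · exact (this hy hx hxy.symm l hl hlP hlmin k hk hkP hkmin hkl.symm (by omega)).symm
  have hxk := coe_iterate_mul_two_pow_of_mem_N2 hx fun j hj hjk h => hkmin j hj hjk (Or.inl h)
  have hyl := coe_iterate_mul_two_pow_of_mem_N2 hy fun j hj hjl h => hlmin j hj hjl (Or.inl h)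
  have hylk := coe_iterate_mul_two_pow_of_mem_N2 hy (k := l - k)
    fun j hj hjl h => hlmin j hj (by omega) (Or.inl h)
  have hxy' : collatz^[l - k] (y : ℕ+) = x := by
    apply PNat.eq
    apply Nat.eq_of_mul_eq_mul_right (pow_pos two_pos (l - k))
    rw [hylk, ← hyl, ← hkl, ← hxk, mul_assoc, ← pow_add, Nat.add_sub_cancel' hle]
  rcases hle.lt_or_eq with hlt | rfl
  · refine absurd (Or.inr ?_) (hlmin (l - k) (by omega) (by omega))
    rw [hxy']
    exact hx
  · exact Subtype.ext (by simpa using hxy'.symm)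

theorem P_one (hP : IsFirstReturnMap collatz (N1 ∪ N2) P) :
    P one = four :=
  Subtype.ext ((hP one).unique (isFirstReturn_apply (f := collatz) (x := 1) (by decide)))

theorem one_mem_orbit_P_iff (hP : IsFirstReturnMap collatz (N1 ∪ N2) P)
    (x : ↥(N1 ∪ N2)) : 1 ∈ orbit collatz (P x) ↔ 1 ∈ orbit collatz x := by
  obtain ⟨k, -, -, hk, -⟩ := hP x
  rw [hk]
  exact mem_orbit_iterate_iff isPeriodicPt_one (by norm_num) k

theorem exists_forall_ge_iterate_P (hP : IsFirstReturnMap collatz (N1 ∪ N2) P)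
    {x : ↥(N1 ∪ N2)} (hx : 1 ∈ orbit collatz x) :
    ∃ r, ∀ n ≥ r, P^[n] x = one ∨ P^[n] x = four := by
  obtain ⟨r, hr : collatz^[r] x = 1⟩ := hx
  refine ⟨r, fun n hn => ?_⟩
  obtain ⟨m, hnm, hm⟩ := hP.exists_iterate_eq n x
  have hcoe : (P^[n] x : ℕ+) = collatz^[m - r] 1 := by
    rw [hm, ← hr, ← iterate_add_apply, Nat.sub_add_cancel (hn.trans hnm)]
  have hmem := (P^[n] x).2
  rw [hcoe] at hmem
  simp only [Subtype.ext_iff, hcoe]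
  rcases collatz_iterate_one (m - r) with h | h | h <;> rw [h] at hmem ⊢
  · exact Or.inl rfl
  · exact Or.inr rfl
  · exact absurd hmem (by decide)

theorem P_eq_P_iff (hP : IsFirstReturnMap collatz (N1 ∪ N2) P)
    {x y : ↥(N1 ∪ N2)} (hxy : ↑x ∈ N1 ↔ ↑y ∈ N1) : P x = P y ↔ x = y := by
  refine ⟨fun h => ?_, congrArg P⟩
  by_cases hx : ↑x ∈ N1
  · exact injOn_P_N1 hP hx (hxy.mp hx) h
  · exact injOn_P_N2 hP (x.2.resolve_left hx) (y.2.resolve_left (mt hxy.mpr hx)) h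

/-- Every `P`-orbit ends in the cycle `1 ↦ 4 ↦ 1`; induct on the time both orbits need to get
there. -/
theorem eq_ite_of_collatz (hP : IsFirstReturnMap collatz (N1 ∪ N2) P)
    (hC : ∀ m : ℕ+, 1 ∈ orbit collatz m) {α : Type*} [Zero α]
    (q : ↥(N1 ∪ N2) → ↥(N1 ∪ N2) → α)
    (hsame : ∀ x y, (↑x ∈ N1 ↔ ↑y ∈ N1) → q (P x) (P y) = q x y)
    (hcross : ∀ x y, ↑x ∈ N1 → ↑y ∈ N2 → q x y = 0 ∧ q y x = 0) (x y : ↥(N1 ∪ N2)) :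
    q x y = if x = y then q one one else 0 := by
  have hcycle : ∀ n x y, (P^[n] x = one ∨ P^[n] x = four) → (P^[n] y = one ∨ P^[n] y = four) →
      q x y = if x = y then q one one else 0 := by
    intro n
    induction n with
    | zero =>
      have h14 : one ≠ four := by decide
      rintro x y (rfl | rfl) (rfl | rfl)
      · simp
      · simp [h14, (hcross one four (by decide) (by decide)).1]
      · simp [h14.symm, (hcross one four (by decide) (by decide)).2]
      · simp [← P_one hP, hsame one one Iff.rfl]
    | succ n ih =>
      intro x y hx hy
      rw [iterate_succ_apply] at hx hy
      by_cases hxy : ↑x ∈ N1 ↔ ↑y ∈ N1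
      · rw [← hsame x y hxy, ih _ _ hx hy]
        exact if_congr (P_eq_P_iff hP hxy) rfl rfl
      · have hne : x ≠ y := fun h => hxy (h ▸ Iff.rfl)
        rw [if_neg hne]
        by_cases hx1 : ↑x ∈ N1
        · exact (hcross x y hx1 (y.2.resolve_left fun hy1 => hxy (iff_of_true hx1 hy1))).1
        · exact (hcross y x (by_contra fun hy1 => hxy (iff_of_false hx1 hy1))
            (x.2.resolve_left hx1)).2
  obtain ⟨r, hr⟩ := exists_forall_ge_iterate_P hP (hC x)
  obtain ⟨s, hs⟩ := exists_forall_ge_iterate_P hP (hC y)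
  exact hcycle (max r s) x y (hr _ (le_max_left _ _)) (hs _ (le_max_right _ _))

section Operators

variable {H : Type*} [NormedAddCommGroup H] [InnerProductSpace ℂ H]
  {b : HilbertBasis ↥(N1 ∪ N2) ℂ H} {T1 T2 : H →L[ℂ] H}

theorem isPartialShift_T1 (hP : IsFirstReturnMap collatz (N1 ∪ N2) P)
    (hT1 : ∀ x : ↥(N1 ∪ N2), ((x : ℕ+) ∈ N1 → T1 (b x) = b (P x)) ∧
      ((x : ℕ+) ∈ N2 → T1 (b x) = 0)) :
    IsPartialShift b (Subtype.val ⁻¹' N1) P T1 where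
  apply_of_mem x hx := (hT1 x).1 hx
  apply_of_notMem x hx := (hT1 x).2 (x.2.resolve_left hx)
  injOn := injOn_P_N1 hP

theorem isPartialShift_T2 (hP : IsFirstReturnMap collatz (N1 ∪ N2) P)
    (hT2 : ∀ x : ↥(N1 ∪ N2), ((x : ℕ+) ∈ N2 → T2 (b x) = b (P x)) ∧
      ((x : ℕ+) ∈ N1 → T2 (b x) = 0)) :
    IsPartialShift b (Subtype.val ⁻¹' N2) P T2 where
  apply_of_mem x hx := (hT2 x).1 hx
  apply_of_notMem x hx := (hT2 x).2 (x.2.resolve_right hx)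
  injOn := injOn_P_N2 hP

variable [CompleteSpace H]

theorem notMem_image_P_N1 (hP : IsFirstReturnMap collatz (N1 ∪ N2) P)
    {x : ↥(N1 ∪ N2)} (hx : ↑x ∈ N1) : x ∉ P '' (Subtype.val ⁻¹' N1) := by
  rintro ⟨w, hw, rfl⟩
  exact notMem_N2_of_mem_N1 hx (P_mem_N2 hP hw)

theorem adjoint_pair_subset_iff (hP : IsFirstReturnMap collatz (N1 ∪ N2) P)
    (hT1 : IsPartialShift b (Subtype.val ⁻¹' N1) P T1)
    (hT2 : IsPartialShift b (Subtype.val ⁻¹' N2) P T2) (R : StarSubalgebra ℂ (H →L[ℂ] H)) :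
    {adjoint T1 * adjoint T2, adjoint T2} ⊆ (R : Set (H →L[ℂ] H)) ↔ T1 ∈ R ∧ T2 ∈ R := by
  have hT1eq : adjoint T2 * star (adjoint T1 * adjoint T2) = T1 := by
    refine b.continuousLinearMap_ext fun x => ?_
    rw [star_mul, ContinuousLinearMap.star_eq_adjoint, ContinuousLinearMap.star_eq_adjoint,
      ContinuousLinearMap.adjoint_adjoint, ContinuousLinearMap.adjoint_adjoint]
    by_cases hx : ↑x ∈ N1
    · have hPx : P x ∈ Subtype.val ⁻¹' N2 := P_mem_N2 hP hx
      change adjoint T2 (T2 (T1 (b x))) = T1 (b x)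
      rw [hT1.apply_of_mem x hx, hT2.apply_of_mem _ hPx, hT2.adjoint_apply_map hPx]
    · change adjoint T2 (T2 (T1 (b x))) = T1 (b x)
      rw [hT1.apply_of_notMem x hx, map_zero, map_zero]
  simp only [Set.insert_subset_iff, Set.singleton_subset_iff, SetLike.mem_coe]
  refine ⟨fun ⟨h12, h2⟩ => ⟨?_, ?_⟩, fun ⟨h1, h2⟩ => ⟨?_, ?_⟩⟩
  · rw [← hT1eq]
    exact mul_mem h2 (star_mem h12)
  · simpa [ContinuousLinearMap.star_eq_adjoint] using star_mem h2
  · rw [← ContinuousLinearMap.star_eq_adjoint, ← ContinuousLinearMap.star_eq_adjoint]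
    exact mul_mem (star_mem h1) (star_mem h2)
  · rw [← ContinuousLinearMap.star_eq_adjoint]
    exact star_mem h2

theorem exists_reducing_ne_bot_ne_top
    (hP : IsFirstReturnMap collatz (N1 ∪ N2) P)
    (hT1 : IsPartialShift b (Subtype.val ⁻¹' N1) P T1)
    (hT2 : IsPartialShift b (Subtype.val ⁻¹' N2) P T2) {m : ℕ+} (hm : 1 ∉ orbit collatz m) :
    ∃ M : Submodule ℂ H, IsClosed (M : Set H) ∧ T1 ∈ M.reducingAlgebra ∧
      T2 ∈ M.reducingAlgebra ∧ M ≠ ⊥ ∧ M ≠ ⊤ := by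
  set E := {x : ↥(N1 ∪ N2) | 1 ∈ orbit collatz ↑x}
  have hE : ∀ x, P x ∈ E ↔ x ∈ E := one_mem_orbit_P_iff hP
  obtain ⟨k, hk⟩ := exists_iterate_mem_N1 m
  have hw : (⟨collatz^[k] m, Or.inl hk⟩ : ↥(N1 ∪ N2)) ∉ E :=
    fun h => hm ((mem_orbit_iterate_iff isPeriodicPt_one (by norm_num) k).mp h)
  refine ⟨_, Submodule.isClosed_topologicalClosure _, hT1.mem_reducingAlgebra fun x _ => hE x,
    hT2.mem_reducingAlgebra fun x _ => hE x, fun h => ?_, fun h => ?_⟩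
  · have h1 := b.apply_mem_closure_span_image_iff.mpr (show one ∈ E from ⟨0, rfl⟩)
    rw [h, Submodule.mem_bot] at h1
    exact b.orthonormal.ne_zero _ h1
  · exact hw (b.apply_mem_closure_span_image_iff.mp (h ▸ Submodule.mem_top))

theorem eq_bot_or_eq_top_of_collatz
    (hP : IsFirstReturnMap collatz (N1 ∪ N2) P)
    (hT1 : IsPartialShift b (Subtype.val ⁻¹' N1) P T1)
    (hT2 : IsPartialShift b (Subtype.val ⁻¹' N2) P T2) (hC : ∀ m : ℕ+, 1 ∈ orbit collatz m)
    {M : Submodule ℂ H} (hM : IsClosed (M : Set H)) (h1 : T1 ∈ M.reducingAlgebra)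
    (h2 : T2 ∈ M.reducingAlgebra) : M = ⊥ ∨ M = ⊤ := by
  have : CompleteSpace M := hM.completeSpace_coe
  have hQ1 := Submodule.commute_starProjection h1
  have hQ1' := Submodule.commute_starProjection (star_mem h1)
  have hQ2 := Submodule.commute_starProjection h2
  rw [ContinuousLinearMap.star_eq_adjoint] at hQ1'
  have hq := eq_ite_of_collatz hP hC (fun x y => ⟪b x, M.starProjection (b y)⟫_ℂ)
    (fun x y hxy => by
      by_cases hx : ↑x ∈ N1
      · exact hT1.inner_map_map_of_commute hQ1 hx (hxy.mp hx)
      · exact hT2.inner_map_map_of_commute hQ2 (x.2.resolve_left hx)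
          (y.2.resolve_left (mt hxy.mpr hx)))
    (fun x y hx hy => by
      obtain ⟨w, hw, rfl⟩ := exists_P_eq_of_mem_N2 hP hy
      exact ⟨hT1.inner_map_right_eq_zero hQ1 hw (notMem_image_P_N1 hP hx),
        hT1.inner_map_left_eq_zero hQ1' hw (notMem_image_P_N1 hP hx)⟩)
  refine Submodule.eq_bot_or_eq_top_of_starProjection_eq_smul
    (c := ⟪b one, M.starProjection (b one)⟫_ℂ)
    (b.continuousLinearMap_ext fun y => b.eq_of_forall_inner_eq fun x => ?_)
  classical
  rw [hq x y]
  simp [inner_smul_right, b.inner_eq_ite]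

end Operators

end Collatz

/-- `C*(S₁,S₂)` has no non-trivial reducing subspaces iff the Collatz conjecture holds. -/
theorem irreducible_cuntz_iff_collatz {H : Type*} [NormedAddCommGroup H] [InnerProductSpace ℂ H]
    [CompleteSpace H] (b : HilbertBasis ↥(N1 ∪ N2) ℂ H)
    (P : ↥(N1 ∪ N2) → ↥(N1 ∪ N2))
    (hP : ∀ x : ↥(N1 ∪ N2), IsFirstReturn collatz (N1 ∪ N2) ↑x ↑(P x))
    (T1 T2 : H →L[ℂ] H)
    (hT1 : ∀ x : ↥(N1 ∪ N2), ((x : ℕ+) ∈ N1 → T1 (b x) = b (P x)) ∧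
      ((x : ℕ+) ∈ N2 → T1 (b x) = 0))
    (hT2 : ∀ x : ↥(N1 ∪ N2), ((x : ℕ+) ∈ N2 → T2 (b x) = b (P x)) ∧
      ((x : ℕ+) ∈ N1 → T2 (b x) = 0))
    (S1 S2 : H →L[ℂ] H)
    (hS1 : S1 = ContinuousLinearMap.adjoint T1 * ContinuousLinearMap.adjoint T2)
    (hS2 : S2 = ContinuousLinearMap.adjoint T2) :
    (∀ M : Submodule ℂ H, IsClosed (M : Set H) →
      (∀ A ∈ CstarGen {S1, S2}, ∀ x ∈ M, A x ∈ M ∧ ContinuousLinearMap.adjoint A x ∈ M) →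
      M = ⊥ ∨ M = ⊤) ↔
      ∀ m : ℕ+, (1 : ℕ+) ∈ orbit collatz m := by
  subst hS1 hS2
  have hT1' := Collatz.isPartialShift_T1 hP hT1
  have hT2' := Collatz.isPartialShift_T2 hP hT2
  have hreducing : ∀ M : Submodule ℂ H, IsClosed (M : Set H) →
      (CstarGen {adjoint T1 * adjoint T2, adjoint T2} ⊆ M.reducingAlgebra ↔
        T1 ∈ M.reducingAlgebra ∧ T2 ∈ M.reducingAlgebra) := fun M hM =>
    (Submodule.cstarGen_subset_reducingAlgebra_iff hM).trans
      (Collatz.adjoint_pair_subset_iff hP hT1' hT2' _)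
  constructor
  · intro hirr m
    by_contra hm
    obtain ⟨M, hM, h1, h2, hbot, htop⟩ := Collatz.exists_reducing_ne_bot_ne_top hP hT1' hT2' hm
    exact (hirr M hM ((hreducing M hM).mpr ⟨h1, h2⟩)).elim hbot htop
  · intro hC M hM hMred
    obtain ⟨h1, h2⟩ := (hreducing M hM).mp hMred
    exact Collatz.eq_bot_or_eq_top_of_collatz hP hT1' hT2' hC hM h1 h2
end

section
/- Let X be a countably infinite set and f : X → X a map satisfying the bounded condition with partition X = X_1 ⊔ ⋯ ⊔ X_k. Let H be a complex Hilbert space with orthonormal basis {e_x}_{x∈X} and T the unique bounded operator on H with T e_x = e_{f(x)} for all x ∈ X. Then for every x ∈ X, the closure of C*(T)·e_x is contained in the closed linear span of {e_y : y ∈ X, y ~ x}, where ~ is the orbit equivalence relation induced by f. -/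
/-!
The closed span `N` of `{e_y : y ~ x}` consists of the vectors orthogonal to every `e_z` with
`z ≁ x`. The class of `x` is closed under `f` and under `f⁻¹`, so `T` maps the span into itself,
and `⟪e_z, T* v⟫ = ⟪e_{f z}, v⟫` shows that `T*` preserves the orthogonality conditions. Thus `N`
reduces `T`. The operators reduced by a subspace form a `*`-subalgebra, and leaving a closed
subspace invariant is a closed condition, so every element of `C*(T)` maps `e_x ∈ N` into `N`.
-/

open Set Submodule
open scoped InnerProductSpace

section Orbit

variable {X : Type*} (f : X → X)

theorem orbEquiv_refl (x : X) : orbEquiv f x x := ⟨x, ⟨0, rfl⟩, ⟨0, rfl⟩⟩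

variable {f}

theorem orbEquiv_apply_left_iff {x y : X} : orbEquiv f (f y) x ↔ orbEquiv f y x := by
  constructor
  · rintro ⟨p, ⟨a, rfl⟩, hp⟩
    exact ⟨_, ⟨a + 1, rfl⟩, hp⟩
  · rintro ⟨p, ⟨a, rfl⟩, c, hc⟩
    refine ⟨f (f^[a] y), ⟨a, ?_⟩, c + 1, ?_⟩
    · exact Function.Commute.iterate_self f a y
    · simp only [Function.iterate_succ_apply', hc]

end Orbit

theorem mapsTo_closure_span_image {ι R M : Type*} [Semiring R] [AddCommMonoid M] [Module R M]
    [TopologicalSpace M] [ContinuousAdd M] [ContinuousConstSMul R M]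
    {e : ι → M} {f : ι → ι} {S : Set ι} {T : M →L[R] M}
    (hT : ∀ i, T (e i) = e (f i)) (hS : MapsTo f S S) :
    MapsTo T (span R (e '' S)).topologicalClosure (span R (e '' S)).topologicalClosure := by
  refine (mapsTo_span ?_).closure T.continuous
  rintro _ ⟨i, hi, rfl⟩
  exact ⟨f i, hS hi, (hT i).symm⟩

section HilbertBasis

variable {ι 𝕜 E : Type*} [RCLike 𝕜] [NormedAddCommGroup E] [InnerProductSpace 𝕜 E]

theorem HilbertBasis.mem_closure_span_image_iff (b : HilbertBasis ι 𝕜 E) {S : Set ι} {v : E} :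
    v ∈ (span 𝕜 (b '' S)).topologicalClosure ↔ ∀ i ∉ S, ⟪b i, v⟫_𝕜 = 0 := by
  constructor
  · intro hv i hi
    have hle : span 𝕜 (b '' S) ≤ LinearMap.ker (innerSL 𝕜 (b i) : E →ₗ[𝕜] 𝕜) := by
      rw [span_le]
      rintro _ ⟨j, hj, rfl⟩
      simpa using b.orthonormal.2 (ne_of_mem_of_not_mem hj hi).symm
    simpa using topologicalClosure_minimal _ hle (innerSL 𝕜 (b i)).isClosed_ker hv
  · intro hv
    refine (isClosed_topologicalClosure _).mem_of_tendsto (b.hasSum_repr v)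
      (Filter.Eventually.of_forall fun s => sum_mem fun i _ => ?_)
    by_cases hi : i ∈ S
    · exact smul_mem _ _ (le_topologicalClosure _ (subset_span ⟨i, hi, rfl⟩))
    · rw [b.repr_apply_apply, hv i hi, zero_smul]
      exact zero_mem _

theorem HilbertBasis.mapsTo_adjoint_closure_span_image [CompleteSpace E]
    (b : HilbertBasis ι 𝕜 E) {f : ι → ι} {S : Set ι} {T : E →L[𝕜] E} (hT : ∀ i, T (b i) = b (f i))
    (hS : MapsTo f Sᶜ Sᶜ) :
    MapsTo (ContinuousLinearMap.adjoint T) (span 𝕜 (b '' S)).topologicalClosure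
      (span 𝕜 (b '' S)).topologicalClosure := by
  intro v hv
  simp only [SetLike.mem_coe, b.mem_closure_span_image_iff] at hv ⊢
  intro i hi
  rw [ContinuousLinearMap.adjoint_inner_right, hT]
  exact hv _ (hS hi)

end HilbertBasis

section Reducing

variable {𝕜 E : Type*} [RCLike 𝕜] [NormedAddCommGroup E] [InnerProductSpace 𝕜 E]
  [CompleteSpace E]

def Submodule.reducingSubalgebra (N : Submodule 𝕜 E) :
    NonUnitalStarSubalgebra 𝕜 (E →L[𝕜] E) where
  carrier := {A : E →L[𝕜] E | MapsTo A N N ∧ MapsTo ⇑(star A) N N}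
  add_mem' {A B} hA hB := by
    refine ⟨fun v hv => add_mem (hA.1 hv) (hB.1 hv), ?_⟩
    rw [star_add]
    exact fun v hv => add_mem (hA.2 hv) (hB.2 hv)
  zero_mem' := by simp [MapsTo, zero_mem]
  mul_mem' {A B} hA hB := by
    rw [mem_ofPred_eq, star_mul]
    exact ⟨hA.1.comp hB.1, hB.2.comp hA.2⟩
  smul_mem' c A hA := by
    rw [mem_ofPred_eq, star_smul]
    exact ⟨fun v hv => smul_mem _ _ (hA.1 hv), fun v hv => smul_mem _ _ (hA.2 hv)⟩
  star_mem' {A} hA := by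
    rw [mem_ofPred_eq, star_star]
    exact hA.symm

theorem Submodule.mapsTo_of_mem_closure_adjoin {N : Submodule 𝕜 E} (hN : IsClosed (N : Set E))
    {s : Set (E →L[𝕜] E)}
    (hs : ∀ A : E →L[𝕜] E, A ∈ s → MapsTo A N N ∧ MapsTo ⇑(star A) N N)
    {A : E →L[𝕜] E} (hA : A ∈ closure (NonUnitalStarAlgebra.adjoin 𝕜 s : Set (E →L[𝕜] E))) :
    MapsTo A N N := by
  have hclosed : IsClosed {B : E →L[𝕜] E | MapsTo B N N} :=
    hN.setOfPred_mapsTo fun v _ => (ContinuousLinearMap.apply 𝕜 E v).continuous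
  refine closure_minimal (fun B hB => ?_) hclosed hA
  exact (NonUnitalStarAlgebra.adjoin_le (S := N.reducingSubalgebra) hs hB).1

end Reducing

theorem cstar_single_orbit_span_general_general {X : Type*} (f : X → X)
    {H : Type*} [NormedAddCommGroup H] [InnerProductSpace ℂ H] [CompleteSpace H]
    (b : HilbertBasis X ℂ H)
    (T : H →L[ℂ] H) (hT : ∀ x : X, T (b x) = b (f x)) (x : X) :
    closure ((fun A => A (b x)) '' CstarGen {T}) ⊆
      closure ((Submodule.span ℂ (b '' {y : X | orbEquiv f y x}) : Submodule ℂ H) : Set H) := by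
  set N := (span ℂ (b '' {y : X | orbEquiv f y x})).topologicalClosure
  have hN : ∀ A : H →L[ℂ] H, A ∈ ({T} : Set (H →L[ℂ] H)) →
      MapsTo A N N ∧ MapsTo ⇑(star A) N N := by
    rintro _ rfl
    refine ⟨mapsTo_closure_span_image hT fun y hy => orbEquiv_apply_left_iff.2 hy,
      b.mapsTo_adjoint_closure_span_image hT fun y hy => ?_⟩
    exact mt orbEquiv_apply_left_iff.1 hy
  have hbx : b x ∈ N := le_topologicalClosure _ (subset_span ⟨x, orbEquiv_refl f x, rfl⟩)
  refine closure_minimal ?_ (isClosed_topologicalClosure _)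
  rintro _ ⟨A, hA, rfl⟩
  exact mapsTo_of_mem_closure_adjoin (isClosed_topologicalClosure _) hN hA hbx

/-- For a map `f` on a countably infinite set satisfying the bounded condition, the
closure of `C*(T)·e_x` is contained in the closed linear span of `{e_y : y ~ x}`. -/
theorem cstar_single_orbit_span_general {X : Type*} [Countable X] [Infinite X]
    (f : X → X) (k : ℕ) (Xp : Fin k → Set X)
    (hdisj : ∀ i j, i ≠ j → Disjoint (Xp i) (Xp j))
    (hcover : (⋃ i, Xp i) = Set.univ)
    (hinj : ∀ i, Set.InjOn f (Xp i))
    {H : Type*} [NormedAddCommGroup H] [InnerProductSpace ℂ H] [CompleteSpace H]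
    (b : HilbertBasis X ℂ H)
    (T : H →L[ℂ] H) (hT : ∀ x : X, T (b x) = b (f x)) (x : X) :
    closure ((fun A => A (b x)) '' CstarGen {T}) ⊆
      closure ((Submodule.span ℂ (b '' {y : X | orbEquiv f y x}) : Submodule ℂ H) : Set H) :=
  cstar_single_orbit_span_general_general f b T hT x
end

section
/- Let X be a countably infinite set and f : X → X a map satisfying the bounded condition with partition X = X_1 ⊔ ⋯ ⊔ X_k, let H be a complex Hilbert space with orthonormal basis {e_x}_{x∈X}, and for 1 ≤ i ≤ k let T_i be the bounded operator with T_i e_x = e_{f(x)} if x ∈ X_i and T_i e_x = 0 otherwise. Assume f satisfies the separating condition for some x ∈ X. If y ~ z for every y, z ∈ X (with ~ the orbit equivalence relation induced by f), then C*(T_1,…,T_k) has no non-trivial reducing subspaces. -/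
/-- `f` satisfies the separating condition for `x` (w.r.t. the partition `Xp`): `x` is
periodic, and for the minimal period `n`, the `n`-tuple recording which piece of the
partition each of `x, f(x), …, f^[n-1](x)` lies in is aperiodic, i.e. differs from every
non-trivial cyclic rotation of itself. -/
def SeparatingCondition {X : Type*} {k : ℕ} (f : X → X) (Xp : Fin k → Set X) (x : X) :
    Prop :=
  ∃ n : ℕ, 0 < n ∧ f^[n] x = x ∧ (∀ m : ℕ, 0 < m → m < n → f^[m] x ≠ x) ∧
    ∀ idx : ℕ → Fin k, (∀ j : ℕ, j < n → f^[j] x ∈ Xp (idx j)) →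
      ∀ r : ℕ, 0 < r → r < n → ∃ j : ℕ, j < n ∧ idx ((j + r) % n) ≠ idx j


/-! The word operator `T_{i_{N-1}} ⋯ T_{i_0}` along the itinerary `i_j` of a point `y` sends
`e_z` to `e_{f^N z}` when the itinerary of `z` agrees with that of `y` for `N` steps and kills it
otherwise; by injectivity of `f` on the pieces, its adjoint sends `e_{f^N y}` back to `e_y`.

Let `x₀` be the separating point, of period `n`. Every point reaches `x₀`, and aperiodicity of the
itinerary of `x₀` shows that `x₀` is the only point with this itinerary. For a reducing subspace
`M`, the projection of `e_{x₀}` onto `M` is fixed by the adjoint words of `x₀` of length a multiple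
of `n`, so its coefficients vanish off `x₀`: either `e_{x₀} ∈ M` or `e_{x₀} ⊥ M`. Moving `e_{x₀}` to
an arbitrary `e_y` by an adjoint word shows that `e_{x₀} ⊥ M` forces `M = 0`; applied to `M` and
to `Mᗮ` this gives `M = 0` or `M = H`. -/

open Function ContinuousLinearMap
open scoped InnerProductSpace

section

variable {𝕜 H : Type*} [RCLike 𝕜] [NormedAddCommGroup H] [InnerProductSpace 𝕜 H]

theorem HilbertBasis.ext_inner {ι : Type*} (b : HilbertBasis ι 𝕜 H) {u v : H}
    (h : ∀ i, ⟪b i, u⟫_𝕜 = ⟪b i, v⟫_𝕜) : u = v :=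
  b.repr.injective <| lp.ext <| funext fun i => by
    simpa only [b.repr_apply_apply] using h i

section Itinerary

variable {X ι : Type*} (f : X → X) (ind : X → ι)

def itinerary (x : X) : ℕ → ι := fun j => ind (f^[j] x)

variable {f ind}

theorem eq_of_iterate_eq_of_itinerary (hinj : ∀ x y, ind x = ind y → f x = f y → x = y)
    {w : ℕ → ι} {N : ℕ} {z z' : X} (hz : ∀ j < N, ind (f^[j] z) = w j)
    (hz' : ∀ j < N, ind (f^[j] z') = w j) (h : f^[N] z = f^[N] z') : z = z' := by
  induction N with
  | zero => exact h
  | succ N ih =>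
    refine ih (fun j hj => hz j (by omega)) (fun j hj => hz' j (by omega)) ?_
    refine hinj _ _ ((hz N N.lt_succ_self).trans (hz' N N.lt_succ_self).symm) ?_
    simpa only [← iterate_succ_apply' f] using h

theorem exists_iterate_eq_of_isPeriodicPt {n : ℕ} {x y : X} (hn : 0 < n)
    (hx : IsPeriodicPt f n x) (hxy : orbEquiv f y x) : ∃ N, f^[N] y = x := by
  obtain ⟨-, ⟨a, rfl⟩, ⟨e, he⟩⟩ := hxy
  have hle : e ≤ n * e := Nat.le_mul_of_pos_left e hn
  refine ⟨n * e - e + a, ?_⟩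
  rw [iterate_add_apply, ← show f^[e] x = f^[a] y from he, ← iterate_add_apply,
    Nat.sub_add_cancel hle]
  exact (hx.mul_const e).eq

theorem eq_of_itinerary_eq (hinj : ∀ x y, ind x = ind y → f x = f y → x = y) {n N : ℕ} {x z : X}
    (hn : 0 < n) (hx : IsPeriodicPt f n x)
    (haper : ∀ r, 0 < r → r < n → ∃ j < n, itinerary f ind x ((j + r) % n) ≠ itinerary f ind x j)
    (hN : f^[N] z = x) (hz : itinerary f ind z = itinerary f ind x) : z = x := by
  have hshift : N % n = 0 := by
    by_contra hr
    obtain ⟨j, -, hj⟩ := haper (N % n) (Nat.pos_of_ne_zero hr) (Nat.mod_lt N hn)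
    apply hj
    calc itinerary f ind x ((j + N % n) % n)
        = itinerary f ind x (j + N) := by
          rw [itinerary, Nat.add_mod_mod, hx.iterate_mod_apply, itinerary]
      _ = itinerary f ind z (j + N) := by rw [hz]
      _ = itinerary f ind x j := by rw [itinerary, iterate_add_apply, hN, itinerary]
  have hxN : f^[N] x = x := by rw [← hx.iterate_mod_apply, hshift, iterate_zero_apply]
  exact eq_of_iterate_eq_of_itinerary hinj (w := itinerary f ind x)
    (fun j _ => congrFun hz j) (fun _ _ => rfl) (hN.trans hxN.symm)

theorem exists_index_of_pairwise_disjoint {Xp : ι → Set X}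
    (hdisj : Pairwise (Disjoint on Xp)) (hcover : (⋃ i, Xp i) = Set.univ) :
    ∃ ind : X → ι, ∀ x i, x ∈ Xp i ↔ ind x = i := by
  choose ind hind using fun x => Set.mem_iUnion.mp (hcover ▸ Set.mem_univ x)
  refine ⟨ind, fun x i => ⟨fun hx => ?_, fun h => h ▸ hind x⟩⟩
  by_contra hne
  exact Set.disjoint_left.mp (hdisj hne) (hind x) hx

end Itinerary

section Words

variable {ι : Type*}

noncomputable def wordOp (T : ι → H →L[𝕜] H) (w : ℕ → ι) : ℕ → H →L[𝕜] H
  | 0 => .id 𝕜 H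
  | N + 1 => T (w N) ∘L wordOp T w N

variable {X : Type*} {f : X → X} {ind : X → ι} {b : HilbertBasis X 𝕜 H} {T : ι → H →L[𝕜] H}
  [DecidableEq ι]

theorem wordOp_apply_basis (hT : ∀ i x, T i (b x) = if ind x = i then b (f x) else 0)
    (w : ℕ → ι) (N : ℕ) (z : X) :
    wordOp T w N (b z) = if ∀ j < N, ind (f^[j] z) = w j then b (f^[N] z) else 0 := by
  induction N with
  | zero => simp [wordOp]
  | succ N ih =>
    rw [wordOp, ContinuousLinearMap.comp_apply, ih]
    by_cases h : ∀ j < N, ind (f^[j] z) = w j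
    · simp only [if_pos h, hT, iterate_succ_apply', Nat.forall_lt_succ_right, and_iff_right h]
    · simp only [map_zero, Nat.forall_lt_succ_right, h, false_and, if_false]

end Words

variable [CompleteSpace H]

def IsReducing (M : Submodule 𝕜 H) (A : H →L[𝕜] H) : Prop :=
  ∀ v ∈ M, A v ∈ M ∧ adjoint A v ∈ M

namespace IsReducing

variable {M : Submodule 𝕜 H} {A B : H →L[𝕜] H}

theorem id : IsReducing M (.id 𝕜 H) := fun v hv => by
  simpa only [adjoint_id, id_apply, and_self] using hv

theorem comp (hA : IsReducing M A) (hB : IsReducing M B) : IsReducing M (A ∘L B) :=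
  fun v hv => ⟨(hA _ (hB v hv).1).1, by
    simpa only [adjoint_comp, ContinuousLinearMap.comp_apply] using (hB _ (hA v hv).2).2⟩

theorem adjoint (hA : IsReducing M A) : IsReducing M (adjoint A) :=
  fun v hv => by simpa only [adjoint_adjoint, and_comm] using hA v hv

theorem orthogonal (hA : IsReducing M A) : IsReducing Mᗮ A := fun v hv =>
  ⟨(Submodule.mem_orthogonal _ _).mpr fun u hu => by
      rw [← adjoint_inner_left]; exact (Submodule.mem_orthogonal _ _).mp hv _ (hA u hu).2,
    (Submodule.mem_orthogonal _ _).mpr fun u hu => by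
      rw [adjoint_inner_right]; exact (Submodule.mem_orthogonal _ _).mp hv _ (hA u hu).1⟩

theorem starProjection_apply [M.HasOrthogonalProjection] (hA : IsReducing M A) (u : H) :
    M.starProjection (A u) = A (M.starProjection u) :=
  Submodule.eq_starProjection_of_mem_of_inner_eq_zero (hA _ (M.starProjection_apply_mem u)).1
    fun w hw => by
      rw [← map_sub, ← adjoint_inner_right]
      exact M.starProjection_inner_eq_zero u _ (hA w hw).2

theorem wordOp {ι : Type*} {T : ι → H →L[𝕜] H} (hT : ∀ i, IsReducing M (T i)) {w : ℕ → ι}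
    {N : ℕ} : IsReducing M (wordOp T w N) := by
  induction N with
  | zero => exact .id
  | succ N ih => exact (hT _).comp ih

end IsReducing

section WeightedShift

variable {X ι : Type*} [DecidableEq ι] {f : X → X} {ind : X → ι} {b : HilbertBasis X 𝕜 H}
  {T : ι → H →L[𝕜] H}

theorem adjoint_wordOp_apply_basis (hT : ∀ i x, T i (b x) = if ind x = i then b (f x) else 0)
    (hinj : ∀ x y, ind x = ind y → f x = f y → x = y) {w : ℕ → ι} {N : ℕ} {z : X}
    (hz : ∀ j < N, ind (f^[j] z) = w j) :
    adjoint (wordOp T w N) (b (f^[N] z)) = b z := by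
  classical
  refine b.ext_inner fun a => ?_
  have hb := orthonormal_iff_ite.mp b.orthonormal
  rw [adjoint_inner_right, wordOp_apply_basis hT, hb]
  by_cases ha : ∀ j < N, ind (f^[j] a) = w j
  · rw [if_pos ha, hb]
    exact if_congr ⟨eq_of_iterate_eq_of_itinerary hinj ha hz, congrArg _⟩ rfl rfl
  · rw [if_neg ha, inner_zero_left, if_neg]
    rintro rfl
    exact ha hz

theorem eq_bot_of_basis_mem_orthogonal
    (hT : ∀ i x, T i (b x) = if ind x = i then b (f x) else 0)
    (hinj : ∀ x y, ind x = ind y → f x = f y → x = y) {x : X} (hreach : ∀ y, ∃ N, f^[N] y = x)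
    {M : Submodule 𝕜 H} (hM : ∀ i, IsReducing M (T i)) (hx : b x ∈ Mᗮ) : M = ⊥ := by
  refine (Submodule.eq_bot_iff M).mpr fun v hv => b.ext_inner fun y => ?_
  obtain ⟨N, hN⟩ := hreach y
  have hW := adjoint_wordOp_apply_basis hT hinj (w := itinerary f ind y) (N := N) (z := y)
    fun _ _ => rfl
  rw [hN] at hW
  rw [inner_zero_right, ← hW, adjoint_inner_left]
  exact (Submodule.mem_orthogonal' _ _).mp hx _ (IsReducing.wordOp hM v hv).1

theorem basis_mem_or_mem_orthogonal
    (hT : ∀ i x, T i (b x) = if ind x = i then b (f x) else 0)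
    (hinj : ∀ x y, ind x = ind y → f x = f y → x = y) {n : ℕ} {x : X} (hn : 0 < n)
    (hx : IsPeriodicPt f n x)
    (huniq : ∀ z, itinerary f ind z = itinerary f ind x → z = x) {M : Submodule 𝕜 H}
    [M.HasOrthogonalProjection] (hM : ∀ i, IsReducing M (T i)) : b x ∈ M ∨ b x ∈ Mᗮ := by
  set m := M.starProjection (b x)
  have hfix : ∀ N, f^[N] x = x → adjoint (wordOp T (itinerary f ind x) N) m = m := by
    intro N hN
    have hW := adjoint_wordOp_apply_basis hT hinj (w := itinerary f ind x) (N := N) (z := x)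
      fun _ _ => rfl
    rw [hN] at hW
    rw [← (IsReducing.wordOp hM).adjoint.starProjection_apply, hW]
  have hcoef : ∀ a ≠ x, ⟪b a, m⟫_𝕜 = 0 := by
    intro a ha
    obtain ⟨j, hj⟩ : ∃ j, ind (f^[j] a) ≠ ind (f^[j] x) := by
      by_contra! h
      exact ha (huniq a (funext h))
    have hjN : j < n * (j + 1) := j.lt_succ_self.trans_le (Nat.le_mul_of_pos_left _ hn)
    rw [← hfix _ (hx.mul_const (j + 1)).eq, adjoint_inner_right, wordOp_apply_basis hT,
      if_neg fun h => hj (h j hjN), inner_zero_left]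
  have hm : m = ⟪b x, m⟫_𝕜 • b x := b.ext_inner fun a => by
    rcases eq_or_ne a x with rfl | ha
    · rw [inner_smul_right, inner_self_eq_one_of_norm_eq_one (b.orthonormal.1 _), mul_one]
    · rw [hcoef a ha, inner_smul_right, b.orthonormal.2 ha, mul_zero]
  by_cases hc : ⟪b x, m⟫_𝕜 = 0
  · right
    rw [← Submodule.starProjection_apply_eq_zero_iff]
    change m = 0
    rw [hm, hc, zero_smul]
  · left
    have hmem : ⟪b x, m⟫_𝕜 • b x ∈ M := hm ▸ M.starProjection_apply_mem (b x)
    exact (Submodule.smul_mem_iff M hc).mp hmem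

end WeightedShift

end

theorem irreducible_general_of_orbit_equiv_general {X : Type*}
    (f : X → X) (k : ℕ) (Xp : Fin k → Set X)
    (hdisj : ∀ i j, i ≠ j → Disjoint (Xp i) (Xp j))
    (hcover : (⋃ i, Xp i) = Set.univ)
    (hinj : ∀ i, Set.InjOn f (Xp i))
    {H : Type*} [NormedAddCommGroup H] [InnerProductSpace ℂ H] [CompleteSpace H]
    (b : HilbertBasis X ℂ H)
    (Ts : Fin k → H →L[ℂ] H)
    (hTs : ∀ i (x : X), (x ∈ Xp i → Ts i (b x) = b (f x)) ∧ (x ∉ Xp i → Ts i (b x) = 0))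
    (hsep : ∃ x : X, SeparatingCondition f Xp x)
    (horb : ∀ y z : X, orbEquiv f y z) :
    ∀ M : Submodule ℂ H, IsClosed (M : Set H) →
      (∀ A ∈ CstarGen (Set.range Ts), ∀ v ∈ M, A v ∈ M ∧ ContinuousLinearMap.adjoint A v ∈ M) →
      M = ⊥ ∨ M = ⊤ := by
  intro M hMclosed hMA
  classical
  obtain ⟨ind, hind⟩ := exists_index_of_pairwise_disjoint hdisj hcover
  have hT : ∀ i x, Ts i (b x) = if ind x = i then b (f x) else 0 := fun i x => by
    split_ifs with h
    · exact (hTs i x).1 ((hind x i).2 h)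
    · exact (hTs i x).2 (mt (hind x i).1 h)
  have hinj_ind : ∀ x y, ind x = ind y → f x = f y → x = y := fun x y hxy =>
    hinj (ind y) ((hind x _).2 hxy) ((hind y _).2 rfl)
  obtain ⟨x₀, n, hn, hper, -, haper⟩ := hsep
  have hreach : ∀ y, ∃ N, f^[N] y = x₀ := fun y =>
    exists_iterate_eq_of_isPeriodicPt hn hper (horb y x₀)
  have huniq : ∀ z, itinerary f ind z = itinerary f ind x₀ → z = x₀ := fun z =>
    eq_of_itinerary_eq hinj_ind hn hper (haper _ fun j _ => (hind _ _).2 rfl)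
      (hreach z).choose_spec
  have hred : ∀ i, IsReducing M (Ts i) := fun i =>
    hMA _ (subset_closure (NonUnitalStarAlgebra.subset_adjoin ℂ _ ⟨i, rfl⟩))
  have : CompleteSpace M := hMclosed.completeSpace_coe
  rcases basis_mem_or_mem_orthogonal hT hinj_ind hn hper huniq hred with hx | hx
  · exact .inr <| Submodule.orthogonal_eq_bot_iff.mp <| eq_bot_of_basis_mem_orthogonal hT hinj_ind
      hreach (fun i => (hred i).orthogonal) (M.le_orthogonal_orthogonal hx)
  · exact .inl <| eq_bot_of_basis_mem_orthogonal hT hinj_ind hreach hred hx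

/-- For a map `f` satisfying the bounded condition and the separating condition for some
point, if all points of `X` are orbit equivalent then `C*(T₁,…,T_k)` has no non-trivial
reducing subspaces. -/
theorem irreducible_general_of_orbit_equiv {X : Type*} [Countable X] [Infinite X]
    (f : X → X) (k : ℕ) (Xp : Fin k → Set X)
    (hdisj : ∀ i j, i ≠ j → Disjoint (Xp i) (Xp j))
    (hcover : (⋃ i, Xp i) = Set.univ)
    (hinj : ∀ i, Set.InjOn f (Xp i))
    {H : Type*} [NormedAddCommGroup H] [InnerProductSpace ℂ H] [CompleteSpace H]
    (b : HilbertBasis X ℂ H)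
    (Ts : Fin k → H →L[ℂ] H)
    (hTs : ∀ i (x : X), (x ∈ Xp i → Ts i (b x) = b (f x)) ∧ (x ∉ Xp i → Ts i (b x) = 0))
    (hsep : ∃ x : X, SeparatingCondition f Xp x)
    (horb : ∀ y z : X, orbEquiv f y z) :
    ∀ M : Submodule ℂ H, IsClosed (M : Set H) →
      (∀ A ∈ CstarGen (Set.range Ts), ∀ v ∈ M, A v ∈ M ∧ ContinuousLinearMap.adjoint A v ∈ M) →
      M = ⊥ ∨ M = ⊤ :=
  irreducible_general_of_orbit_equiv_general f k Xp hdisj hcover hinj b Ts hTs hsep horb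
end

section
/- Let X be a set, f : X → X a map, Σ ⊆ X a nonempty subset, and P the first-return map of f on Σ, assumed to be defined on all of Σ. Then: (a) if orb(x;f) ∩ Σ ≠ ∅ for every x ∈ X and x ~ y by P for every x, y ∈ Σ, then x ~ y by f for every x, y ∈ X; and (b) if there exists a periodic point x ∈ Σ of f with orb(x;P) = orb(x;f) ∩ Σ, and y ~ z by f for every y, z ∈ X, then y ~ z by P for every y, z ∈ Σ. -/
/-! The `P`-orbit of a point `y ∈ S` is exactly `orb(y;f) ∩ S`: it is contained there because
`P` is an iterate of `f` on `S`, and conversely an `f`-iterate of `y` landing in `S` is reached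
by returning to `S` finitely many times. Part (a) then follows by pulling a common point of
two `P`-orbits back to `f`-orbits. For part (b), a periodic point `x` lies in the `f`-orbit of
every point of its own orbit, hence (by orbit equivalence) in the `f`-orbit of every `y`; for
`y ∈ S` this puts `x` on the `P`-orbit of `y`. -/

open Function

section Orbit

variable {X : Type*} {f : X → X} {x y : X}

lemma iterate_mem_orbit (f : X → X) (x : X) (n : ℕ) : f^[n] x ∈ orbit f x := ⟨n, rfl⟩

lemma orbit_subset_of_mem (h : y ∈ orbit f x) : orbit f y ⊆ orbit f x := by
  rintro _ ⟨m, rfl⟩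
  obtain ⟨k, rfl⟩ := h
  exact ⟨m + k, iterate_add_apply f m k x⟩

lemma orbEquiv_of_mem_orbit {s t : X} (hs : s ∈ orbit f x) (ht : t ∈ orbit f y)
    (hst : orbEquiv f s t) : orbEquiv f x y :=
  hst.mono (Set.inter_subset_inter (orbit_subset_of_mem hs) (orbit_subset_of_mem ht))

lemma Function.IsPeriodicPt.mem_orbit_of_mem_orbit {n : ℕ} (hx : IsPeriodicPt f n x) (hn : 0 < n)
    (hy : y ∈ orbit f x) : x ∈ orbit f y := by
  obtain ⟨k, rfl⟩ := hy
  refine ⟨n * k - k, ?_⟩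
  calc f^[n * k - k] (f^[k] x) = f^[n * k] x := by
        rw [← iterate_add_apply, Nat.sub_add_cancel (Nat.le_mul_of_pos_left k hn)]
    _ = x := (hx.mul_const k).eq

end Orbit

section FirstReturn

variable {X : Type*} {f P : X → X} {S : Set X} {y : X}

lemma orbit_firstReturn_subset (hP : ∀ x ∈ S, IsFirstReturn f S x (P x)) (hy : y ∈ S) :
    orbit P y ⊆ orbit f y ∩ S := by
  rintro _ ⟨n, rfl⟩
  induction n with
  | zero => exact ⟨⟨0, rfl⟩, hy⟩
  | succ n ih =>
    obtain ⟨k, -, hkS, hPk, -⟩ := hP _ ih.2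
    simp only [iterate_succ_apply', hPk]
    exact ⟨orbit_subset_of_mem ih.1 (iterate_mem_orbit f _ k), hkS⟩

lemma inter_subset_orbit_firstReturn (hP : ∀ x ∈ S, IsFirstReturn f S x (P x)) (hy : y ∈ S) :
    orbit f y ∩ S ⊆ orbit P y := by
  rintro _ ⟨⟨m, rfl⟩, hmS⟩
  induction m using Nat.strong_induction_on generalizing y with
  | _ m ih =>
    obtain rfl | hm := Nat.eq_zero_or_pos m
    · exact ⟨0, rfl⟩
    obtain ⟨k, hk, hkS, hPk, hfirst⟩ := hP y hy
    have hkm : k ≤ m := by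
      by_contra! hmk
      exact hfirst m hm hmk hmS
    have hshift : f^[m] y = f^[m - k] (P y) := by
      rw [hPk, ← iterate_add_apply, Nat.sub_add_cancel hkm]
    obtain ⟨n, hn⟩ := ih (m - k) (by omega) (hPk ▸ hkS) (by simpa only [hshift] using hmS)
    exact ⟨n + 1, by simp only [iterate_succ_apply, hn, hshift]⟩

theorem orbit_firstReturn_eq (hP : ∀ x ∈ S, IsFirstReturn f S x (P x)) (hy : y ∈ S) :
    orbit P y = orbit f y ∩ S :=
  (orbit_firstReturn_subset hP hy).antisymm (inter_subset_orbit_firstReturn hP hy)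

lemma orbEquiv_of_orbEquiv_firstReturn (hP : ∀ x ∈ S, IsFirstReturn f S x (P x)) {z : X}
    (hy : y ∈ S) (hz : z ∈ S) (h : orbEquiv P y z) : orbEquiv f y z :=
  h.mono (Set.inter_subset_inter (fun _ hw => (orbit_firstReturn_subset hP hy hw).1)
    (fun _ hw => (orbit_firstReturn_subset hP hz hw).1))

end FirstReturn

theorem firstReturn_orbit_equiv_transfer_general {X : Type*} (f : X → X) (S : Set X)
    (P : X → X) (hP : ∀ x ∈ S, IsFirstReturn f S x (P x)) :
    ((∀ x : X, (orbit f x ∩ S).Nonempty) →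
      (∀ x ∈ S, ∀ y ∈ S, orbEquiv P x y) →
      ∀ x y : X, orbEquiv f x y) ∧
    ((∃ x ∈ S, (∃ n : ℕ, 0 < n ∧ f^[n] x = x) ∧ orbit P x = orbit f x ∩ S) →
      (∀ y z : X, orbEquiv f y z) →
      ∀ y ∈ S, ∀ z ∈ S, orbEquiv P y z) := by
  constructor
  · intro hmeet hP_equiv x y
    obtain ⟨s, hsx, hsS⟩ := hmeet x
    obtain ⟨t, hty, htS⟩ := hmeet y
    exact orbEquiv_of_mem_orbit hsx hty
      (orbEquiv_of_orbEquiv_firstReturn hP hsS htS (hP_equiv s hsS t htS))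
  · rintro ⟨x, hxS, ⟨n, hn, hper⟩, -⟩ hf_equiv
    have hx_mem : ∀ y ∈ S, x ∈ orbit P y := by
      intro y hy
      obtain ⟨v, hvy, hvx⟩ := hf_equiv y x
      have hxy : x ∈ orbit f y :=
        orbit_subset_of_mem hvy (IsPeriodicPt.mem_orbit_of_mem_orbit hper hn hvx)
      exact orbit_firstReturn_eq hP hy ▸ ⟨hxy, hxS⟩
    exact fun y hy z hz => ⟨x, hx_mem y hy, hx_mem z hz⟩

/-- Transfer of orbit equivalence between a map `f` and its first-return map `P` on a
nonempty subset `Σ`: (a) if every `f`-orbit meets `Σ` and all points of `Σ` are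
`P`-orbit-equivalent, then all points of `X` are `f`-orbit-equivalent; (b) if some
`f`-periodic point `x ∈ Σ` satisfies `orb(x;P) = orb(x;f) ∩ Σ` and all points of `X` are
`f`-orbit-equivalent, then all points of `Σ` are `P`-orbit-equivalent. -/
theorem firstReturn_orbit_equiv_transfer {X : Type*} (f : X → X) (S : Set X)
    (hS : S.Nonempty) (P : X → X) (hP : ∀ x ∈ S, IsFirstReturn f S x (P x)) :
    ((∀ x : X, (orbit f x ∩ S).Nonempty) →
      (∀ x ∈ S, ∀ y ∈ S, orbEquiv P x y) →
      ∀ x y : X, orbEquiv f x y) ∧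
    ((∃ x ∈ S, (∃ n : ℕ, 0 < n ∧ f^[n] x = x) ∧ orbit P x = orbit f x ∩ S) →
      (∀ y z : X, orbEquiv f y z) →
      ∀ y ∈ S, ∀ z ∈ S, orbEquiv P y z) :=
  firstReturn_orbit_equiv_transfer_general f S P hP
end
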